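/- Let q = p^α, where p is an odd prime and α ≥ 1 is an integer, and let A, B, C, D, E be complex-valued Dirichlet characters mod q. Then ₃F₂(A,B,C;D,E|1) = (A·D)(−1) · ₃F₂(A, B̄·D, C; D, A·C·Ē | 1). -/

import Mathlib

open Finset

/-- The complex-conjugate Dirichlet character. -/
noncomputable def conjChar {q : ℕ} (A : DirichletCharacter ℂ q) : DirichletCharacter ℂ q :=
  A.ringHomComp (starRingEnd ℂ)

/-- The binomial coefficient `binom(A,B) = B(-1)/q * J(A, B̄)` for Dirichlet characters. -/
noncomputable def dBinom {q : ℕ} [NeZero q] (A B : DirichletCharacter ℂ q) : ℂ :=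
  B (-1) / q * jacobiSum A (conjChar B)

/-- The hypergeometric function `₃F₂` for Dirichlet characters. -/
noncomputable def threeF₂ {q : ℕ} [NeZero q] (A B C D E : DirichletCharacter ℂ q)
    (x : ZMod q) : ℂ :=
  (q / (Nat.totient q : ℂ)) *
    ∑ᶠ χ : DirichletCharacter ℂ q,
      dBinom (A * χ) χ * dBinom (B * χ) (D * χ) * dBinom (C * χ) (E * χ) * χ x

/-! Expanding the three Jacobi sums and summing over `χ` by orthogonality writes
`₃F₂(A,B,C;D,E|1)` as `D(-1)E(-1)/q²` times the sum of `A(x)B(y)C(z)D̄(1-y)Ē(1-z)` over the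
triples with `(1-x)(1-y)(1-z) = -xyz` a unit. The substitution
`(x,y,z) ↦ (x/(1-z), 1/y, -z/(1-z))` is an involution of this set which turns the summand for
`(A, B̄D, C; D, ACĒ)` into `C(-1)D(-1)` times the summand for `(A,B,C;D,E)`. -/

theorem Fintype.sum_mul_sum_mul_sum {α β γ R : Type*} [Fintype α] [Fintype β] [Fintype γ]
    [CommSemiring R] (f : α → R) (g : β → R) (h : γ → R) :
    (∑ a, f a) * (∑ b, g b) * (∑ c, h c) = ∑ t : α × β × γ, f t.1 * g t.2.1 * h t.2.2 := by
  rw [mul_assoc, Fintype.sum_mul_sum, Fintype.sum_mul_sum, Fintype.sum_prod_type]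
  simp only [Fintype.sum_prod_type, Finset.mul_sum, mul_assoc]

lemma conjChar_apply {q : ℕ} (χ : DirichletCharacter ℂ q) (a : ZMod q) :
    conjChar χ a = (χ a)⁻¹ := by
  rw [show conjChar χ = star χ from rfl, MulChar.star_eq_inv, MulChar.inv_apply_eq_inv']

namespace DirichletCharacter

variable {q : ℕ}

lemma apply_inv_of_isUnit (χ : DirichletCharacter ℂ q) {a : ZMod q} (ha : IsUnit a) :
    χ a⁻¹ = (χ a)⁻¹ :=
  eq_inv_of_mul_eq_one_left <| by rw [← map_mul, ZMod.inv_mul_of_unit a ha, map_one]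

lemma apply_neg_one_sq (χ : DirichletCharacter ℂ q) : χ (-1) ^ 2 = 1 := by
  rw [← map_pow, neg_one_sq, map_one]

lemma inv_apply_neg_one (χ : DirichletCharacter ℂ q) : (χ (-1))⁻¹ = χ (-1) := by
  rw [← apply_inv_of_isUnit χ isUnit_one.neg, ZMod.inv_neg_one]

variable [NeZero q]

lemma sum_apply_mul_inv_apply (a b : ZMod q) :
    ∑ χ : DirichletCharacter ℂ q, χ a * (χ b)⁻¹ =
      if IsUnit b ∧ b = a then (q.totient : ℂ) else 0 := by
  by_cases hb : IsUnit b
  · have h (χ : DirichletCharacter ℂ q) : χ a * (χ b)⁻¹ = χ b⁻¹ * χ a := by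
      rw [apply_inv_of_isUnit χ hb, mul_comm]
    simp only [h, sum_char_inv_mul_char_eq ℂ hb, hb, true_and]
  · simp [MulChar.map_nonunit _ hb, hb]

end DirichletCharacter

section ThreeF₂

variable {q : ℕ} [NeZero q]

open DirichletCharacter

lemma dBinom_eq_sum (A B : DirichletCharacter ℂ q) :
    dBinom A B = B (-1) / q * ∑ x : ZMod q, A x * (B (1 - x))⁻¹ := by
  simp only [dBinom, jacobiSum, conjChar_apply]

lemma dBinom_mul_mul (A B χ : DirichletCharacter ℂ q) :
    dBinom (A * χ) (B * χ) =
      B (-1) / q * ∑ x : ZMod q, A x * (B (1 - x))⁻¹ * (χ (-x) * (χ (1 - x))⁻¹) := by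
  rw [dBinom_eq_sum, MulChar.mul_apply, mul_div_right_comm, mul_assoc, Finset.mul_sum]
  congr 1
  refine Finset.sum_congr rfl fun x _ => ?_
  rw [neg_eq_neg_one_mul x]
  simp only [MulChar.mul_apply, map_mul, mul_inv]
  ring

lemma dBinom_mul_self (A χ : DirichletCharacter ℂ q) :
    dBinom (A * χ) χ = 1 / q * ∑ x : ZMod q, A x * (χ (-x) * (χ (1 - x))⁻¹) := by
  rw [dBinom_eq_sum, div_eq_mul_one_div (χ (-1)), mul_comm (χ (-1)), mul_assoc, Finset.mul_sum]
  congr 1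
  refine Finset.sum_congr rfl fun x _ => ?_
  rw [neg_eq_neg_one_mul x]
  simp only [MulChar.mul_apply, map_mul]
  ring

noncomputable def threeF₂Weight (A B C D E : DirichletCharacter ℂ q)
    (t : ZMod q × ZMod q × ZMod q) : ℂ :=
  A t.1 * B t.2.1 * C t.2.2 * (D (1 - t.2.1))⁻¹ * (E (1 - t.2.2))⁻¹

lemma threeF₂_summand_eq_sum (A B C D E χ : DirichletCharacter ℂ q) :
    dBinom (A * χ) χ * dBinom (B * χ) (D * χ) * dBinom (C * χ) (E * χ) * χ 1 =
      D (-1) * E (-1) / q ^ 3 * ∑ t, threeF₂Weight A B C D E t *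
        (χ (-(t.1 * t.2.1 * t.2.2)) * (χ ((1 - t.1) * (1 - t.2.1) * (1 - t.2.2)))⁻¹) := by
  rw [dBinom_mul_self, dBinom_mul_mul, dBinom_mul_mul, map_one, mul_one,
    show ∀ a b c S₁ S₂ S₃ : ℂ, a * S₁ * (b * S₂) * (c * S₃) = a * b * c * (S₁ * S₂ * S₃) from
      fun _ _ _ _ _ _ => by ring,
    Fintype.sum_mul_sum_mul_sum, Finset.mul_sum, Finset.mul_sum]
  refine Finset.sum_congr rfl fun t _ => ?_
  rw [show -(t.1 * t.2.1 * t.2.2) = -t.1 * -t.2.1 * -t.2.2 by ring]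
  simp only [threeF₂Weight, map_mul, mul_inv]
  ring

open scoped Classical in
noncomputable def threeF₂Locus (q : ℕ) [NeZero q] : Finset (ZMod q × ZMod q × ZMod q) :=
  univ.filter fun t => IsUnit ((1 - t.1) * (1 - t.2.1) * (1 - t.2.2)) ∧
    (1 - t.1) * (1 - t.2.1) * (1 - t.2.2) = -(t.1 * t.2.1 * t.2.2)

lemma mem_threeF₂Locus {t : ZMod q × ZMod q × ZMod q} :
    t ∈ threeF₂Locus q ↔ IsUnit ((1 - t.1) * (1 - t.2.1) * (1 - t.2.2)) ∧
      (1 - t.1) * (1 - t.2.1) * (1 - t.2.2) = -(t.1 * t.2.1 * t.2.2) := by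
  simp only [threeF₂Locus, mem_filter, mem_univ, true_and]

lemma threeF₂_one_eq_sum_threeF₂Weight (A B C D E : DirichletCharacter ℂ q) :
    threeF₂ A B C D E 1 =
      D (-1) * E (-1) / q ^ 2 * ∑ t ∈ threeF₂Locus q, threeF₂Weight A B C D E t := by
  have hφ : (q.totient : ℂ) ≠ 0 := by exact_mod_cast (Nat.totient_pos.mpr (NeZero.pos q)).ne'
  have hq : (q : ℂ) ≠ 0 := NeZero.ne _
  classical
  rw [threeF₂, finsum_eq_sum_of_fintype]
  simp only [threeF₂_summand_eq_sum, ← Finset.mul_sum]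
  rw [Finset.sum_comm]
  simp only [← Finset.mul_sum, sum_apply_mul_inv_apply, mul_ite, mul_zero]
  rw [← Finset.sum_filter, ← Finset.sum_mul, ← threeF₂Locus]
  field_simp

lemma isUnit_of_mem_threeF₂Locus {t : ZMod q × ZMod q × ZMod q} (ht : t ∈ threeF₂Locus q) :
    IsUnit t.1 ∧ IsUnit t.2.1 ∧ IsUnit t.2.2 ∧ IsUnit (1 - t.2.2) := by
  obtain ⟨hunit, heq⟩ := mem_threeF₂Locus.mp ht
  have hprod := hunit
  rw [heq, IsUnit.neg_iff] at hprod
  simp only [IsUnit.mul_iff] at hunit hprod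
  exact ⟨hprod.1.1, hprod.1.2, hprod.2, hunit.2⟩

def threeF₂Involution (q : ℕ) (t : ZMod q × ZMod q × ZMod q) : ZMod q × ZMod q × ZMod q :=
  (t.1 * (1 - t.2.2)⁻¹, t.2.1⁻¹, -(t.2.2 * (1 - t.2.2)⁻¹))

lemma threeF₂Involution_mem_threeF₂Locus {t : ZMod q × ZMod q × ZMod q}
    (ht : t ∈ threeF₂Locus q) : threeF₂Involution q t ∈ threeF₂Locus q := by
  obtain ⟨hx, hy, hz, h1z⟩ := isUnit_of_mem_threeF₂Locus ht
  obtain ⟨x, y, z⟩ := t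
  have heq := (mem_threeF₂Locus.mp ht).2
  have hu := ZMod.mul_inv_of_unit _ h1z
  have hv := ZMod.mul_inv_of_unit _ hy
  have heq' : (1 - x * (1 - z)⁻¹) * (1 - y⁻¹) * (1 - -(z * (1 - z)⁻¹)) =
      -(x * (1 - z)⁻¹ * y⁻¹ * -(z * (1 - z)⁻¹)) := by
    have h1X : 1 - x * (1 - z)⁻¹ = (1 - x - z) * (1 - z)⁻¹ := by linear_combination -hu
    have h1Y : 1 - y⁻¹ = -((1 - y) * y⁻¹) := by linear_combination -hv
    have h1Z : 1 - -(z * (1 - z)⁻¹) = (1 - z)⁻¹ := by linear_combination -hu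
    rw [h1X, h1Y, h1Z]
    linear_combination (-((1 - z)⁻¹ * (1 - z)⁻¹ * y⁻¹)) * heq
  have hu' : IsUnit (1 - z)⁻¹ := .of_mul_eq_one _ (ZMod.inv_mul_of_unit _ h1z)
  have hv' : IsUnit y⁻¹ := .of_mul_eq_one _ (ZMod.inv_mul_of_unit _ hy)
  refine mem_threeF₂Locus.mpr ⟨?_, heq'⟩
  rw [threeF₂Involution, heq']
  exact (((hx.mul hu').mul hv').mul (hz.mul hu').neg).neg

lemma threeF₂Involution_threeF₂Involution {t : ZMod q × ZMod q × ZMod q}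
    (ht : t ∈ threeF₂Locus q) : threeF₂Involution q (threeF₂Involution q t) = t := by
  obtain ⟨-, hy, -, h1z⟩ := isUnit_of_mem_threeF₂Locus ht
  obtain ⟨x, y, z⟩ := t
  have hu := ZMod.mul_inv_of_unit _ h1z
  have h1Z : 1 - -(z * (1 - z)⁻¹) = (1 - z)⁻¹ := by linear_combination -hu
  have hinvz : ((1 - z)⁻¹)⁻¹ = 1 - z :=
    ZMod.inv_eq_of_mul_eq_one q _ _ (ZMod.inv_mul_of_unit _ h1z)
  have hinvy : y⁻¹⁻¹ = y := ZMod.inv_eq_of_mul_eq_one q _ _ (ZMod.inv_mul_of_unit _ hy)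
  simp only [threeF₂Involution, h1Z, hinvz, hinvy]
  exact Prod.ext (by linear_combination x * hu) (Prod.ext rfl (by linear_combination z * hu))

lemma threeF₂Weight_threeF₂Involution (A B C D E : DirichletCharacter ℂ q)
    {t : ZMod q × ZMod q × ZMod q} (ht : t ∈ threeF₂Locus q) :
    threeF₂Weight A (conjChar B * D) C D (A * C * conjChar E) t =
      C (-1) * D (-1) * threeF₂Weight A B C D E (threeF₂Involution q t) := by
  obtain ⟨-, hy, -, h1z⟩ := isUnit_of_mem_threeF₂Locus ht
  obtain ⟨x, y, z⟩ := t
  have h1Y : 1 - y⁻¹ = -1 * (1 - y) * y⁻¹ := by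
    linear_combination -ZMod.mul_inv_of_unit _ hy
  have h1Z : 1 - -(z * (1 - z)⁻¹) = (1 - z)⁻¹ := by
    linear_combination -ZMod.mul_inv_of_unit _ h1z
  simp only [threeF₂Weight, threeF₂Involution]
  rw [h1Y, h1Z, neg_eq_neg_one_mul (z * _)]
  simp only [MulChar.mul_apply, conjChar_apply, map_mul, apply_inv_of_isUnit _ hy,
    apply_inv_of_isUnit _ h1z, mul_inv, inv_inv, inv_apply_neg_one]
  ring_nf
  simp only [apply_neg_one_sq, mul_one]

end ThreeF₂

theorem threeF₂_transform₄_general (q : ℕ) [NeZero q] (A B C D E : DirichletCharacter ℂ q) :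
    threeF₂ A B C D E 1 =
      (A * D) (-1) * threeF₂ A (conjChar B * D) C D (A * C * conjChar E) 1 := by
  have hsum :
      ∑ t ∈ threeF₂Locus q, threeF₂Weight A (conjChar B * D) C D (A * C * conjChar E) t =
        C (-1) * D (-1) * ∑ t ∈ threeF₂Locus q, threeF₂Weight A B C D E t := by
    rw [Finset.mul_sum]
    exact Finset.sum_nbij' (threeF₂Involution q) (threeF₂Involution q)
      (fun _ ↦ threeF₂Involution_mem_threeF₂Locus) (fun _ ↦ threeF₂Involution_mem_threeF₂Locus)
      (fun _ ↦ threeF₂Involution_threeF₂Involution) (fun _ ↦ threeF₂Involution_threeF₂Involution)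
      (fun _ ↦ threeF₂Weight_threeF₂Involution A B C D E)
  have hsign : (A * D) (-1) * (D (-1) * (A * C * conjChar E) (-1)) * (C (-1) * D (-1)) =
      D (-1) * E (-1) := by
    simp only [MulChar.mul_apply, conjChar_apply, DirichletCharacter.inv_apply_neg_one]
    linear_combination C (-1) ^ 2 * D (-1) ^ 3 * E (-1) * A.apply_neg_one_sq +
      D (-1) ^ 3 * E (-1) * C.apply_neg_one_sq + D (-1) * E (-1) * D.apply_neg_one_sq
  rw [threeF₂_one_eq_sum_threeF₂Weight, threeF₂_one_eq_sum_threeF₂Weight, hsum, ← hsign]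
  ring

theorem threeF₂_transform₄ (p α : ℕ) (hp : p.Prime) (hodd : Odd p) (hα : 1 ≤ α)
    (q : ℕ) (hq : q = p ^ α) [NeZero q] (A B C D E : DirichletCharacter ℂ q) :
    threeF₂ A B C D E 1 =
      (A * D) (-1) * threeF₂ A (conjChar B * D) C D (A * C * conjChar E) 1 :=
  threeF₂_transform₄_general q A B C D E
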